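/- Let F and Q be exchangeable information structures on S^N with identical, strictly positive marginals. Then F is sCAD-higher than Q if and only if E(Γ,F) ⊆ E(Γ,Q) for every congestion game Γ (i.e., every game with β ≤ 0 and h nondecreasing). -/

import Mathlib

open Finset

def IsPMF {n : ℕ} {S : Type*} [Fintype S] (F : (Fin (n + 2) → S) → ℝ) : Prop :=
  (∀ t, 0 ≤ F t) ∧ ∑ t : Fin (n + 2) → S, F t = 1

def Exchangeable {n : ℕ} {S : Type*} [Fintype S] (F : (Fin (n + 2) → S) → ℝ) : Prop :=
  ∀ (π : Equiv.Perm (Fin (n + 2))) (t : Fin (n + 2) → S), F (t ∘ π) = F t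

noncomputable def marg {n : ℕ} {S : Type*} [Fintype S] [DecidableEq S]
    (F : (Fin (n + 2) → S) → ℝ) (s : S) : ℝ :=
  ∑ t : Fin (n + 2) → S, if t 0 = s then F t else 0

def countIn {n : ℕ} {S : Type*} [Fintype S] [DecidableEq S]
    (K : Finset S) (t : Fin (n + 2) → S) : ℕ :=
  (univ.filter (fun j : Fin (n + 2) => j ≠ 0 ∧ t j ∈ K)).card

noncomputable def tailProb {n : ℕ} {S : Type*} [Fintype S] [DecidableEq S]
    (F : (Fin (n + 2) → S) → ℝ) (s : S) (K : Finset S) (m : ℕ) : ℝ :=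
  (∑ t : Fin (n + 2) → S, if t 0 = s ∧ m ≤ countIn K t then F t else 0) / marg F s

def sCAD {n : ℕ} {S : Type*} [Fintype S] [DecidableEq S]
    (F Q : (Fin (n + 2) → S) → ℝ) : Prop :=
  (∀ s, marg F s = marg Q s) ∧
  ∀ (s : S) (K : Finset S), s ∈ K → ∀ m : ℕ, m ≤ n + 1 →
    tailProb F s K m ≥ tailProb Q s K m

/-- A congestion game: `d(A,s) = α(s) + β(s)·h(A)` with `β ≤ 0` and `h` nondecreasing. -/
structure CongestionGame (S : Type*) where
  α : S → ℝ
  β : S → ℝ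
  h : ℕ → ℝ
  hβ : ∀ s, β s ≤ 0
  hmono : ∀ a b : ℕ, a ≤ b → h a ≤ h b

noncomputable def payoff {S : Type*} (G : CongestionGame S) (A : ℕ) (s : S) : ℝ :=
  G.α s + G.β s * G.h A

def acts {n : ℕ} {S : Type*} (σ : S → Bool) (t : Fin (n + 2) → S) : ℕ :=
  (univ.filter (fun j : Fin (n + 2) => j ≠ 0 ∧ σ (t j) = true)).card

noncomputable def U {n : ℕ} {S : Type*} [Fintype S] [DecidableEq S]
    (G : CongestionGame S) (F : (Fin (n + 2) → S) → ℝ) (σ : S → Bool) (s : S) : ℝ :=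
  (∑ t : Fin (n + 2) → S, if t 0 = s then F t * payoff G (acts σ t) s else 0) / marg F s

def IsEquilibrium {n : ℕ} {S : Type*} [Fintype S] [DecidableEq S]
    (G : CongestionGame S) (F : (Fin (n + 2) → S) → ℝ) (σ : S → Bool) : Prop :=
  ∀ s : S, (σ s = true → 0 ≤ U G F σ s) ∧ (σ s = false → U G F σ s ≤ 0)

section aux
variable {n : ℕ} {S : Type*} [Fintype S] [DecidableEq S]

lemma countIn_le (K : Finset S) (t : Fin (n + 2) → S) : countIn K t ≤ n + 1 := by
  have h1 : (univ.filter (fun j : Fin (n + 2) => j ≠ 0 ∧ t j ∈ K)) ⊆ univ.erase 0 := by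
    intro j hj
    simp only [mem_filter, mem_erase, mem_univ, and_true] at *
    exact hj.2.1
  have := Finset.card_le_card h1
  simpa [countIn, Finset.card_erase_of_mem] using this

lemma countIn_add_compl (K : Finset S) (t : Fin (n + 2) → S) :
    countIn K t + countIn Kᶜ t = n + 1 := by
  have key : ∀ K' : Finset S, (univ.filter (fun j : Fin (n+2) => j ≠ 0 ∧ t j ∈ K'))
      = (univ.filter (fun j : Fin (n+2) => j ≠ 0)).filter (fun j => t j ∈ K') := by
    intro K'; rw [Finset.filter_filter]
  unfold countIn
  rw [key K, key Kᶜ]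
  have h2 : (univ.filter (fun j : Fin (n+2) => j ≠ 0)).filter (fun j => t j ∈ Kᶜ)
      = (univ.filter (fun j : Fin (n+2) => j ≠ 0)).filter (fun j => ¬ (t j ∈ K)) := by
    apply Finset.filter_congr; intro j _; simp
  rw [h2, Finset.card_filter_add_card_filter_not]
  simp [Finset.filter_ne', Finset.card_erase_of_mem]

lemma tele2 (h : ℕ → ℝ) : ∀ C : ℕ, ∑ m ∈ Icc 1 C, (h m - h (m - 1)) = h C - h 0 := by
  intro C; induction C with
  | zero => simp
  | succ k ih =>
    rw [Finset.sum_Icc_succ_top (by omega), ih]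
    simp

lemma telescope (h : ℕ → ℝ) (C : ℕ) (hC : C ≤ n + 1) :
    h 0 + ∑ m ∈ Icc 1 (n + 1), (if m ≤ C then h m - h (m - 1) else 0) = h C := by
  have h1 : ∑ m ∈ Icc 1 C, (if m ≤ C then h m - h (m - 1) else 0)
      = ∑ m ∈ Icc 1 (n + 1), (if m ≤ C then h m - h (m - 1) else 0) := by
    apply Finset.sum_subset (Finset.Icc_subset_Icc_right hC)
    intro m hm hnm
    rw [if_neg]
    intro hc
    exact hnm (Finset.mem_Icc.mpr ⟨(Finset.mem_Icc.mp hm).1, hc⟩)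
  rw [← h1]
  have h2 : ∑ m ∈ Icc 1 C, (if m ≤ C then h m - h (m - 1) else 0)
      = ∑ m ∈ Icc 1 C, (h m - h (m - 1)) := by
    apply Finset.sum_congr rfl
    intro m hm
    rw [if_pos (Finset.mem_Icc.mp hm).2]
  rw [h2, tele2]
  ring

lemma exp_layer (F : (Fin (n + 2) → S) → ℝ) (s : S) (K : Finset S) (h : ℕ → ℝ) :
    ∑ t : Fin (n + 2) → S, (if t 0 = s then F t * h (countIn K t) else 0)
    = h 0 * marg F s
      + ∑ m ∈ Icc 1 (n + 1), (h m - h (m - 1)) *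
          (∑ t : Fin (n + 2) → S, if t 0 = s ∧ m ≤ countIn K t then F t else 0) := by
  have step : ∀ t : Fin (n+2) → S,
      (if t 0 = s then F t * h (countIn K t) else 0)
      = (h 0 * if t 0 = s then F t else 0)
        + ∑ m ∈ Icc 1 (n + 1), (h m - h (m - 1)) * (if t 0 = s ∧ m ≤ countIn K t then F t else 0) := by
    intro t
    by_cases ht : t 0 = s
    · simp only [ht, if_true, true_and]
      rw [← telescope (n := n) h (countIn K t) (countIn_le K t)]
      rw [mul_add, Finset.mul_sum, mul_comm (F t) (h 0)]
      congr 1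
      apply Finset.sum_congr rfl
      intro m _
      split_ifs <;> ring
    · simp [ht]
  rw [Finset.sum_congr rfl (fun t _ => step t), Finset.sum_add_distrib]
  congr 1
  · rw [marg, Finset.mul_sum]
  · rw [Finset.sum_comm]
    apply Finset.sum_congr rfl
    intro m _
    rw [Finset.mul_sum]

lemma U_num (G : CongestionGame S) (F : (Fin (n + 2) → S) → ℝ) (σ : S → Bool) (s : S) :
    ∑ t : Fin (n + 2) → S, (if t 0 = s then F t * payoff G (acts σ t) s else 0)
    = G.α s * marg F s
      + G.β s * (∑ t : Fin (n + 2) → S, if t 0 = s then F t * G.h (acts σ t) else 0) := by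
  rw [marg, Finset.mul_sum, Finset.mul_sum, ← Finset.sum_add_distrib]
  apply Finset.sum_congr rfl
  intro t _
  split_ifs <;> simp [payoff] <;> ring

lemma U_eq (G : CongestionGame S) (F : (Fin (n + 2) → S) → ℝ) (σ : S → Bool) (s : S)
    (hm : marg F s ≠ 0) :
    U G F σ s = G.α s + G.β s *
      ((∑ t : Fin (n + 2) → S, if t 0 = s then F t * G.h (acts σ t) else 0) / marg F s) := by
  rw [U, U_num]
  field_simp

lemma acts_eq_countIn (σ : S → Bool) (t : Fin (n + 2) → S) :
    acts σ t = countIn (univ.filter (fun s => σ s = true)) t := by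
  unfold acts countIn
  congr 1
  apply Finset.filter_congr
  intro j _
  simp

lemma exp_le (F Q : (Fin (n + 2) → S) → ℝ) (s : S) (K : Finset S) (hh : ℕ → ℝ)
    (hmono : ∀ m ∈ Icc 1 (n + 1), hh (m - 1) ≤ hh m)
    (hmargeq : marg F s = marg Q s)
    (hT : ∀ m ∈ Icc 1 (n + 1),
      (∑ t : Fin (n + 2) → S, if t 0 = s ∧ m ≤ countIn K t then Q t else 0)
      ≤ (∑ t : Fin (n + 2) → S, if t 0 = s ∧ m ≤ countIn K t then F t else 0)) :
    ∑ t : Fin (n + 2) → S, (if t 0 = s then Q t * hh (countIn K t) else 0)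
    ≤ ∑ t : Fin (n + 2) → S, (if t 0 = s then F t * hh (countIn K t) else 0) := by
  rw [exp_layer, exp_layer, hmargeq]
  apply add_le_add_right
  apply Finset.sum_le_sum
  intro m hm
  have h1 : 0 ≤ hh m - hh (m - 1) := sub_nonneg.mpr (hmono m hm)
  exact mul_le_mul_of_nonneg_left (hT m hm) h1

end aux

/-- `F ⪰sCAD Q` iff the equilibrium set weakly shrinks from `Q` to `F`
in every congestion game (β ≤ 0, h nondecreasing). -/
theorem scad_iff_congestion_equilibrium_shrinks {n : ℕ}
    {S : Type*} [Fintype S] [DecidableEq S] [Nonempty S]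
    (F Q : (Fin (n + 2) → S) → ℝ)
    (hFpmf : IsPMF F) (hQpmf : IsPMF Q)
    (hFex : Exchangeable F) (hQex : Exchangeable Q)
    (hmarg : ∀ s, marg F s = marg Q s)
    (hpos : ∀ s, 0 < marg F s) :
    sCAD F Q ↔ ∀ (G : CongestionGame S) (σ : S → Bool),
      IsEquilibrium G F σ → IsEquilibrium G Q σ := by
  have hposQ : ∀ s, 0 < marg Q s := fun s => (hmarg s) ▸ hpos s
  constructor
  · -- sCAD → equilibrium shrinking
    rintro ⟨-, htail⟩ G σ heqF s
    set K : Finset S := univ.filter (fun s' => σ s' = true) with hK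
    have hEacts : ∀ (P : (Fin (n+2) → S) → ℝ),
        (∑ t : Fin (n+2) → S, if t 0 = s then P t * G.h (acts σ t) else 0)
        = ∑ t : Fin (n+2) → S, if t 0 = s then P t * G.h (countIn K t) else 0 := by
      intro P
      apply Finset.sum_congr rfl
      intro t _
      rw [acts_eq_countIn]
    -- numerator tail inequalities
    have hTnum : ∀ (K' : Finset S), s ∈ K' → ∀ m ∈ Icc 1 (n+1),
        (∑ t : Fin (n + 2) → S, if t 0 = s ∧ m ≤ countIn K' t then Q t else 0)
        ≤ (∑ t : Fin (n + 2) → S, if t 0 = s ∧ m ≤ countIn K' t then F t else 0) := by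
      intro K' hsK' m hm
      have h1 : tailProb Q s K' m ≤ tailProb F s K' m :=
        htail s K' hsK' m (Finset.mem_Icc.mp hm).2
      have h2 := mul_le_mul_of_nonneg_right h1 (le_of_lt (hpos s))
      rw [tailProb, tailProb, hmarg s] at h2
      rw [div_mul_cancel₀ _ (ne_of_gt (hposQ s)), div_mul_cancel₀ _ (ne_of_gt (hposQ s))] at h2
      exact h2
    rcases heqF s with ⟨heqF1, heqF2⟩
    constructor
    · -- σ s = true
      intro hst
      have hsK : s ∈ K := by simp [hK, hst]
      have hE : (∑ t : Fin (n+2) → S, if t 0 = s then Q t * G.h (countIn K t) else 0)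
          ≤ ∑ t : Fin (n+2) → S, if t 0 = s then F t * G.h (countIn K t) else 0 :=
        exp_le F Q s K G.h (fun m _ => G.hmono (m-1) m (by omega)) (hmarg s)
          (hTnum K hsK)
      have hUF := heqF1 hst
      rw [U_eq G F σ s (ne_of_gt (hpos s)), hEacts F] at hUF
      rw [U_eq G Q σ s (ne_of_gt (hposQ s)), hEacts Q]
      have hdiv : (∑ t : Fin (n+2) → S, if t 0 = s then Q t * G.h (countIn K t) else 0) / marg Q s
          ≤ (∑ t : Fin (n+2) → S, if t 0 = s then F t * G.h (countIn K t) else 0) / marg F s := by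
        rw [hmarg s]
        gcongr
        exact le_of_lt (hposQ s)
      have hb := mul_le_mul_of_nonpos_left hdiv (G.hβ s)
      linarith
    · -- σ s = false
      intro hst
      have hsK : s ∈ Kᶜ := by simp [hK, hst]
      set hh : ℕ → ℝ := fun A => G.h (n + 1 - A) with hhh
      have hcompl : ∀ (P : (Fin (n+2) → S) → ℝ),
          (∑ t : Fin (n+2) → S, if t 0 = s then P t * G.h (countIn K t) else 0)
          = ∑ t : Fin (n+2) → S, if t 0 = s then P t * hh (countIn Kᶜ t) else 0 := by
        intro P
        apply Finset.sum_congr rfl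
        intro t _
        have h1 := countIn_add_compl K t
        have h2 : n + 1 - countIn Kᶜ t = countIn K t := by omega
        simp only [hhh, h2]
      have hneg : ∀ (P : (Fin (n+2) → S) → ℝ),
          (∑ t : Fin (n+2) → S, if t 0 = s then P t * (fun A => -hh A) (countIn Kᶜ t) else 0)
          = -∑ t : Fin (n+2) → S, if t 0 = s then P t * hh (countIn Kᶜ t) else 0 := by
        intro P
        rw [← Finset.sum_neg_distrib]
        apply Finset.sum_congr rfl
        intro t _
        split_ifs <;> simp
      have hE0 := exp_le F Q s Kᶜ (fun A => -hh A)
        (by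
          intro m hm
          simp only [neg_le_neg_iff, hhh]
          exact G.hmono _ _ (by omega))
        (hmarg s) (hTnum Kᶜ hsK)
      rw [hneg F, hneg Q] at hE0
      have hE : (∑ t : Fin (n+2) → S, if t 0 = s then F t * G.h (countIn K t) else 0)
          ≤ ∑ t : Fin (n+2) → S, if t 0 = s then Q t * G.h (countIn K t) else 0 := by
        rw [hcompl F, hcompl Q]
        linarith
      have hUF := heqF2 hst
      rw [U_eq G F σ s (ne_of_gt (hpos s)), hEacts F] at hUF
      rw [U_eq G Q σ s (ne_of_gt (hposQ s)), hEacts Q]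
      have hdiv : (∑ t : Fin (n+2) → S, if t 0 = s then F t * G.h (countIn K t) else 0) / marg F s
          ≤ (∑ t : Fin (n+2) → S, if t 0 = s then Q t * G.h (countIn K t) else 0) / marg Q s := by
        rw [hmarg s]
        gcongr
        exact le_of_lt (hposQ s)
      have hb := mul_le_mul_of_nonpos_left hdiv (G.hβ s)
      linarith
  · -- equilibrium shrinking → sCAD
    intro himp
    refine ⟨hmarg, ?_⟩
    intro s K hsK m hm
    classical
    set G : CongestionGame S :=
      { α := fun s' => if s' ∈ K then tailProb F s' K m else 0
        β := fun s' => if s' ∈ K then -1 else 0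
        h := fun A => if m ≤ A then (1:ℝ) else 0
        hβ := by intro s'; split_ifs <;> norm_num
        hmono := by
          intro a b hab
          split_ifs <;> norm_num
          omega } with hG
    set σ : S → Bool := fun s' => decide (s' ∈ K) with hσ
    have hKσ : (univ.filter (fun s' => σ s' = true)) = K := by
      ext s'; simp [hσ]
    have hacts : ∀ t : Fin (n+2) → S, acts σ t = countIn K t := by
      intro t; rw [acts_eq_countIn, hKσ]
    have hUeq : ∀ (P : (Fin (n+2) → S) → ℝ), marg P s ≠ (0:ℝ) → True := fun _ _ => trivial
    have hUval : ∀ (P : (Fin (n+2) → S) → ℝ) (s' : S), marg P s' ≠ 0 →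
        U G P σ s' = G.α s' + G.β s' * tailProb P s' K m := by
      intro P s' hm'
      rw [U_eq G P σ s' hm', tailProb]
      have hE : (∑ t : Fin (n + 2) → S, if t 0 = s' then P t * G.h (acts σ t) else 0)
          = ∑ t : Fin (n + 2) → S, if t 0 = s' ∧ m ≤ countIn K t then P t else 0 := by
        apply Finset.sum_congr rfl
        intro t _
        rw [hacts t]
        show (if t 0 = s' then P t * (if m ≤ countIn K t then (1:ℝ) else 0) else 0) = _
        split_ifs <;> simp_all
      rw [hE]
    have heqF : IsEquilibrium G F σ := by
      intro s'
      by_cases hs' : s' ∈ K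
      · have hval : U G F σ s' = 0 := by
          rw [hUval F s' (ne_of_gt (hpos s'))]
          show (if s' ∈ K then tailProb F s' K m else 0) +
            (if s' ∈ K then (-1:ℝ) else 0) * tailProb F s' K m = 0
          rw [if_pos hs', if_pos hs']; ring
        constructor
        · intro _; rw [hval]
        · intro hfalse; simp [hσ, hs'] at hfalse
      · have hval : U G F σ s' = 0 := by
          rw [hUval F s' (ne_of_gt (hpos s'))]
          show (if s' ∈ K then tailProb F s' K m else 0) +
            (if s' ∈ K then (-1:ℝ) else 0) * tailProb F s' K m = 0
          rw [if_neg hs', if_neg hs']; ring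
        exact ⟨fun _ => le_of_eq hval.symm, fun _ => le_of_eq hval⟩
    have heqQ := himp G σ heqF
    have h1 := (heqQ s).1 (by simp [hσ, hsK])
    rw [hUval Q s (ne_of_gt (hposQ s))] at h1
    revert h1
    show 0 ≤ (if s ∈ K then tailProb F s K m else 0) +
        (if s ∈ K then (-1:ℝ) else 0) * tailProb Q s K m → _
    rw [if_pos hsK, if_pos hsK]
    intro h1
    linarith
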